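/- arXiv:2007.07211 — 3 statements merged into one kernel-verified Lean document; each statement's English description precedes it below -/
import Mathlib

section
/- Let M>0, 0 ≤ a ≤ M, and let m, ω, Λ be real with Λ > 0 and Λ ≥ (2/3)m². Set σ = a·m·ω/Λ and consider the quadratic Q(r) = ½r² − M(1−2σ)r + (a²/6)(1 − 2m²/Λ). Then Q has at most one root in the interval [M, ∞); equivalently, if Q has two real roots, the smaller one is strictly less than M. (Consequently, by Rolle's theorem, the potential V₀(r) = (Δ(r)Λ + 4MramωM − a²m²)/(r²+a²)² has at most two critical points on (M,∞).) -/
lemma stmt_2_aux (M b c r₁ r₂ : ℝ) (hM : 0 < M) (h1 : M ≤ r₁) (h2 : M ≤ r₂)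
    (hne : r₁ ≠ r₂) (e1 : (1/2)*r₁^2 - b*r₁ + c = 0) (e2 : (1/2)*r₂^2 - b*r₂ + c = 0)
    (hc : c < M^2/2) : False := by
  have key : (r₁ - r₂) * ((r₁ + r₂) - 2*b) = 0 := by nlinarith [e1, e2]
  have hsum : r₁ + r₂ = 2*b := by
    rcases mul_eq_zero.mp key with h | h
    · exact absurd (sub_eq_zero.mp h) hne
    · linarith
  have hprod : M * M ≤ r₁ * r₂ := mul_le_mul h1 h2 hM.le (le_trans hM.le h1)
  nlinarith [e1, hsum, hprod, hc]

/-- For `M > 0`, `0 ≤ a ≤ M`, `Λ > 0`, `Λ ≥ (2/3)m²`, `σ = amω/Λ`, the quadratic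
`Q(r) = ½r² − M(1−2σ)r + (a²/6)(1−2m²/Λ)` has at most one root in `[M,∞)`;
equivalently, if it has two real roots, the smaller one is strictly less than `M`. -/
theorem stmt_2 (M a m ω Λ : ℝ) (hM : 0 < M) (ha0 : 0 ≤ a) (haM : a ≤ M)
    (hΛ : 0 < Λ) (hΛm : (2/3)*m^2 ≤ Λ) :
    let σ : ℝ := a*m*ω/Λ
    let Q : ℝ → ℝ := fun r => (1/2)*r^2 - M*(1 - 2*σ)*r + (a^2/6)*(1 - 2*m^2/Λ)
    (∀ r₁ r₂ : ℝ, M ≤ r₁ → M ≤ r₂ → Q r₁ = 0 → Q r₂ = 0 → r₁ = r₂)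
    ∧ (∀ r₁ r₂ : ℝ, Q r₁ = 0 → Q r₂ = 0 → r₁ < r₂ → r₁ < M) := by
  intro σ Q
  have hu : 0 ≤ m^2/Λ := div_nonneg (sq_nonneg m) hΛ.le
  have ha2 : a^2 ≤ M^2 := by nlinarith
  have hc : (a^2/6)*(1 - 2*m^2/Λ) < M^2/2 := by
    have key : (a^2/6)*(1 - 2*m^2/Λ) = a^2/6 - (a^2*(m^2/Λ))/3 := by
      field_simp; ring
    rw [key]
    nlinarith [mul_nonneg (sq_nonneg a) hu, mul_pos hM hM]
  constructor
  · intro r₁ r₂ h1 h2 e1 e2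
    by_contra hne
    exact stmt_2_aux M (M*(1 - 2*σ)) ((a^2/6)*(1 - 2*m^2/Λ)) r₁ r₂ hM h1 h2 hne
      (by simpa [Q] using e1) (by simpa [Q] using e2) hc
  · intro r₁ r₂ e1 e2 hlt
    by_contra h
    push_neg at h
    exact stmt_2_aux M (M*(1 - 2*σ)) ((a^2/6)*(1 - 2*m^2/Λ)) r₁ r₂ hM h (le_trans h hlt.le)
      (ne_of_lt hlt) (by simpa [Q] using e1) (by simpa [Q] using e2) hc
end

section
/- Let σ ∈ {−1,+1}, ω ∈ ℝ, w, Φ, c : ℝ → ℝ with w > 0, Φ continuous, c continuously differentiable with c' > 0 on [A,B], and let ψ, φ : ℝ → ℂ with ψ continuously differentiable satisfy w·φ = −σψ' − iωψ + iΦψ. Then ∫_A^B c'|ψ|² dr* ≤ 2c(B)|ψ(B)|² − 2c(A)|ψ(A)|² + ∫_A^B (4w²c²/c')·|φ|² dr*. -/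
/-!
Integrate `(c‖ψ‖²)' = c'‖ψ‖² + 2c⟪ψ, ψ'⟫` over `[A, B]`. The transport equation gives
`⟪ψ, ψ'⟫ = -σ⟪ψ, wφ⟫`, because `iωψ` and `iΦψ` are orthogonal to `ψ`, so the cross term is at most
`2|c|‖ψ‖‖wφ‖ ≤ c'‖ψ‖²/2 + 2c²‖wφ‖²/c'`, and half of the left-hand side is absorbed.
-/

open Set MeasureTheory intervalIntegral
open scoped InnerProductSpace

section TransportEstimate

variable {E : Type*} [NormedAddCommGroup E] [InnerProductSpace ℝ E]

theorem integral_deriv_mul_norm_sq_add_inner_eq {c : ℝ → ℝ} {ψ : ℝ → E}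
    (hc : ContDiff ℝ 1 c) (hψ : ContDiff ℝ 1 ψ) (A B : ℝ) :
    ∫ x in A..B, (deriv c x * ‖ψ x‖ ^ 2 + 2 * c x * ⟪ψ x, deriv ψ x⟫_ℝ)
      = c B * ‖ψ B‖ ^ 2 - c A * ‖ψ A‖ ^ 2 := by
  have hcd := hc.continuous_deriv le_rfl
  have hψd := hψ.continuous_deriv le_rfl
  have hψc := hψ.continuous
  have hcont : Continuous fun x => deriv c x * ‖ψ x‖ ^ 2 + 2 * c x * ⟪ψ x, deriv ψ x⟫_ℝ := by
    fun_prop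
  refine integral_eq_sub_of_hasDerivAt (f := fun x => c x * ‖ψ x‖ ^ 2) (fun x _ => ?_)
    (hcont.intervalIntegrable A B)
  have hcx := (hc.differentiable one_ne_zero x).hasDerivAt
  have hψx := (hψ.differentiable one_ne_zero x).hasDerivAt
  exact (hcx.mul hψx.norm_sq).congr_deriv (by ring)

theorem neg_two_mul_inner_le {t c G : ℝ} {u v : E} (ht : 0 < t) (huv : |⟪u, v⟫_ℝ| ≤ ‖u‖ * G) :
    -(2 * c * ⟪u, v⟫_ℝ) ≤ t / 2 * ‖u‖ ^ 2 + 2 * c ^ 2 * G ^ 2 / t := by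
  calc -(2 * c * ⟪u, v⟫_ℝ) ≤ |2 * c * ⟪u, v⟫_ℝ| := neg_le_abs _
    _ = 2 * |c| * |⟪u, v⟫_ℝ| := by rw [abs_mul, abs_mul, abs_two]
    _ ≤ 2 * |c| * (‖u‖ * G) := by gcongr
    _ = 2 * ‖u‖ * (|c| * G) := by ring
    _ ≤ t / 2 * ‖u‖ ^ 2 + (t / 2)⁻¹ * (|c| * G) ^ 2 := two_mul_le_add_mul_sq (half_pos ht)
    _ = t / 2 * ‖u‖ ^ 2 + 2 * c ^ 2 * G ^ 2 / t := by
        rw [mul_pow, sq_abs]; field_simp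

theorem integral_deriv_mul_norm_sq_le {c G : ℝ → ℝ} {ψ : ℝ → E} {A B : ℝ} (hAB : A ≤ B)
    (hc : ContDiff ℝ 1 c) (hψ : ContDiff ℝ 1 ψ) (hG : ContinuousOn G (Icc A B))
    (hc' : ∀ x ∈ Icc A B, 0 < deriv c x)
    (hψG : ∀ x ∈ Icc A B, |⟪ψ x, deriv ψ x⟫_ℝ| ≤ ‖ψ x‖ * G x) :
    ∫ x in A..B, deriv c x * ‖ψ x‖ ^ 2
      ≤ 2 * c B * ‖ψ B‖ ^ 2 - 2 * c A * ‖ψ A‖ ^ 2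
        + ∫ x in A..B, 4 * c x ^ 2 * G x ^ 2 / deriv c x := by
  have hcd := hc.continuous_deriv le_rfl
  have hψc := hψ.continuous
  have hψd := hψ.continuous_deriv le_rfl
  have hint_lhs : IntervalIntegrable (fun x => deriv c x * ‖ψ x‖ ^ 2) volume A B :=
    Continuous.intervalIntegrable (by fun_prop) A B
  have hint_deriv : IntervalIntegrable
      (fun x => deriv c x * ‖ψ x‖ ^ 2 + 2 * c x * ⟪ψ x, deriv ψ x⟫_ℝ) volume A B :=
    Continuous.intervalIntegrable (by fun_prop) A B
  have hint_rhs : IntervalIntegrable (fun x => 4 * c x ^ 2 * G x ^ 2 / deriv c x) volume A B := by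
    refine ContinuousOn.intervalIntegrable ?_
    rw [uIcc_of_le hAB]
    exact ((continuous_const.mul (hc.continuous.pow 2)).continuousOn.mul (hG.pow 2)).div
      hcd.continuousOn fun x hx => (hc' x hx).ne'
  have hpointwise : ∀ x ∈ Icc A B, deriv c x * ‖ψ x‖ ^ 2 / 2
      ≤ (deriv c x * ‖ψ x‖ ^ 2 + 2 * c x * ⟪ψ x, deriv ψ x⟫_ℝ)
        + 4 * c x ^ 2 * G x ^ 2 / deriv c x / 2 := by
    intro x hx
    have hcross := neg_two_mul_inner_le (c := c x) (hc' x hx) (hψG x hx)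
    have hhalf : 4 * c x ^ 2 * G x ^ 2 / deriv c x / 2 = 2 * c x ^ 2 * G x ^ 2 / deriv c x := by
      ring
    linarith
  have hmono := integral_mono_on hAB (hint_lhs.div_const 2)
    (hint_deriv.add (hint_rhs.div_const 2)) hpointwise
  rw [integral_add hint_deriv (hint_rhs.div_const 2),
    integral_deriv_mul_norm_sq_add_inner_eq hc hψ, intervalIntegral.integral_div,
    intervalIntegral.integral_div] at hmono
  linarith

end TransportEstimate

namespace Complex

theorem real_inner_I_mul_ofReal_mul_self (r : ℝ) (z : ℂ) :
    ⟪z, I * r * z⟫_ℝ = 0 := by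
  simp only [Complex.inner, mul_re, mul_im, I_re, I_im, ofReal_re, ofReal_im, conj_re, conj_im]
  ring

theorem abs_real_inner_le_of_transport {σ ω Φ w : ℝ} (hσ : |σ| = 1)
    {z dz f : ℂ} (htr : (w : ℂ) * f = -(σ : ℂ) * dz - I * (ω : ℂ) * z + I * (Φ : ℂ) * z) :
    |⟪z, dz⟫_ℝ| ≤ ‖z‖ * ‖(w : ℂ) * f‖ := by
  have hσsq : σ ^ 2 = 1 := by rw [← sq_abs, hσ, one_pow]
  have hdz : dz = σ • (-((w : ℂ) * f) + I * ((Φ - ω : ℝ) : ℂ) * z) := by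
    have hσsq' : (σ : ℂ) ^ 2 = 1 := by exact_mod_cast hσsq
    rw [real_smul]; push_cast
    linear_combination (σ : ℂ) * htr - dz * hσsq'
  have hinner : ⟪z, dz⟫_ℝ = -σ * ⟪z, (w : ℂ) * f⟫_ℝ := by
    rw [hdz, real_inner_smul_right, inner_add_right, inner_neg_right,
      real_inner_I_mul_ofReal_mul_self]
    ring
  rw [hinner, abs_mul, abs_neg, hσ, one_mul]
  exact abs_real_inner_le_norm _ _

end Complex

theorem stmt_10_general (σ ω : ℝ) (hσ : σ = 1 ∨ σ = -1) (w Φ c : ℝ → ℝ)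
    (hΦ : Continuous Φ) (hc : ContDiff ℝ 1 c)
    (A B : ℝ) (hAB : A ≤ B) (hc' : ∀ x ∈ Set.Icc A B, 0 < deriv c x)
    (ψ φ : ℝ → ℂ) (hψ : ContDiff ℝ 1 ψ)
    (htr : ∀ x, (w x : ℂ) * φ x
      = -(σ : ℂ) * deriv ψ x - Complex.I * (ω : ℂ) * ψ x + Complex.I * (Φ x : ℂ) * ψ x) :
    ∫ x in A..B, deriv c x * ‖ψ x‖^2
      ≤ 2*(c B)*‖ψ B‖^2 - 2*(c A)*‖ψ A‖^2
        + ∫ x in A..B, (4*(w x)^2*(c x)^2/deriv c x) * ‖φ x‖^2 := by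
  have hψc := hψ.continuous
  have hψd := hψ.continuous_deriv le_rfl
  have hwφ : Continuous fun x => (w x : ℂ) * φ x := by
    simp_rw [htr]
    fun_prop
  have habsσ : |σ| = 1 := by rcases hσ with rfl | rfl <;> norm_num
  have hestimate := integral_deriv_mul_norm_sq_le hAB hc hψ hwφ.norm.continuousOn hc'
    fun x _ => Complex.abs_real_inner_le_of_transport habsσ (htr x)
  convert hestimate using 2
  refine integral_congr fun x _ => ?_
  simp only [norm_mul, Complex.norm_real, Real.norm_eq_abs, mul_pow, sq_abs]
  ring

/-- Cauchy–Schwarz refinement of the transport identity: if `w·φ = −σψ' − iωψ + iΦψ` with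
`σ = ±1` and `c' > 0` on `[A,B]`, then
`∫_A^B c'|ψ|² ≤ 2c(B)|ψ(B)|² − 2c(A)|ψ(A)|² + ∫_A^B (4w²c²/c')|φ|²`. -/
theorem stmt_10 (σ ω : ℝ) (hσ : σ = 1 ∨ σ = -1) (w Φ c : ℝ → ℝ)
    (hw : ∀ x, 0 < w x) (hΦ : Continuous Φ) (hc : ContDiff ℝ 1 c)
    (A B : ℝ) (hAB : A ≤ B) (hc' : ∀ x ∈ Set.Icc A B, 0 < deriv c x)
    (ψ φ : ℝ → ℂ) (hψ : ContDiff ℝ 1 ψ)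
    (htr : ∀ x, (w x : ℂ) * φ x
      = -(σ : ℂ) * deriv ψ x - Complex.I * (ω : ℂ) * ψ x + Complex.I * (Φ x : ℂ) * ψ x) :
    ∫ x in A..B, deriv c x * ‖ψ x‖^2
      ≤ 2*(c B)*‖ψ B‖^2 - 2*(c A)*‖ψ A‖^2
        + ∫ x in A..B, (4*(w x)^2*(c x)^2/deriv c x) * ‖φ x‖^2 :=
  stmt_10_general σ ω hσ w Φ c hΦ hc A B hAB hc' ψ φ hψ htr
end

section
/- Let M > 0, and let a, m, Λ be real and ω real nonzero. Set Δ(r) = r² − 2Mr + a², V₀(r) = (Δ(r)Λ + 4Mr·amω − a²m²)/(r²+a²)², and r₀ := am/(2Mω). Then, provided r₀² + a² ≠ 0, V₀(r₀) − ω² = [Δ(r₀)/(r₀²+a²)²]·( Λ − ω²(r₀² + 2Mr₀ + a²) ). In particular, if in addition a ≠ 0, r₀ > r₊ := M+√(M²−a²) (so Δ(r₀)>0), and Λ > ω²(r₀² + 2Mr₀ + a²), then V₀(r₀) > ω². -/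
/-- With `r₀ = am/(2Mω)`, `Δ(r) = r² − 2Mr + a²` and
`V₀(r) = (Δ(r)Λ + 4Mr·amω − a²m²)/(r²+a²)²`, provided `r₀² + a² ≠ 0`,
`V₀(r₀) − ω² = [Δ(r₀)/(r₀²+a²)²](Λ − ω²(r₀² + 2Mr₀ + a²))`; in particular if moreover
`a ≠ 0`, `r₀ > r₊ = M + √(M²−a²)` and `Λ > ω²(r₀² + 2Mr₀ + a²)`, then `V₀(r₀) > ω²`. -/
theorem stmt_12 (M a m Λ ω : ℝ) (hM : 0 < M) (hω : ω ≠ 0) :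
    let r₀ : ℝ := a*m/(2*M*ω)
    let Δ : ℝ → ℝ := fun r => r^2 - 2*M*r + a^2
    let V₀ : ℝ → ℝ := fun r => (Δ r * Λ + 4*M*r*a*m*ω - a^2*m^2)/(r^2 + a^2)^2
    (r₀^2 + a^2 ≠ 0 →
      V₀ r₀ - ω^2 = (Δ r₀/(r₀^2 + a^2)^2) * (Λ - ω^2*(r₀^2 + 2*M*r₀ + a^2)))
    ∧ (r₀^2 + a^2 ≠ 0 → a ≠ 0 → M + Real.sqrt (M^2 - a^2) < r₀ →
        ω^2*(r₀^2 + 2*M*r₀ + a^2) < Λ → ω^2 < V₀ r₀) := by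
  intro r₀ Δ V₀
  have hMω : (2*M*ω) ≠ 0 := by positivity
  have ham : a*m = 2*M*ω*r₀ := by
    show a*m = 2*M*ω*(a*m/(2*M*ω)); field_simp
  have key : ∀ h : r₀^2 + a^2 ≠ 0,
      V₀ r₀ - ω^2 = (Δ r₀/(r₀^2 + a^2)^2) * (Λ - ω^2*(r₀^2 + 2*M*r₀ + a^2)) := by
    intro h
    show (Δ r₀ * Λ + 4*M*r₀*a*m*ω - a^2*m^2)/(r₀^2 + a^2)^2 - ω^2 = _
    have h2 : ((r₀:ℝ)^2 + a^2)^2 ≠ 0 := pow_ne_zero _ h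
    show ((r₀^2 - 2*M*r₀ + a^2) * Λ + 4*M*r₀*a*m*ω - a^2*m^2)/(r₀^2 + a^2)^2 - ω^2
      = ((r₀^2 - 2*M*r₀ + a^2)/(r₀^2 + a^2)^2) * (Λ - ω^2*(r₀^2 + 2*M*r₀ + a^2))
    field_simp
    linear_combination (2*M*ω*r₀ - a*m) * ham
  refine ⟨key, ?_⟩
  intro h ha hr hΛ
  have hΔ : 0 < Δ r₀ := by
    show 0 < r₀^2 - 2*M*r₀ + a^2
    rcases le_or_gt (a^2) (M^2) with hc | hc
    · have hs : Real.sqrt (M^2 - a^2) ^ 2 = M^2 - a^2 :=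
        Real.sq_sqrt (by linarith)
      have h1 : Real.sqrt (M^2 - a^2) < r₀ - M := by linarith
      have h0 : (0:ℝ) ≤ Real.sqrt (M^2 - a^2) := Real.sqrt_nonneg _
      nlinarith [sq_nonneg (r₀ - M)]
    · have hs : Real.sqrt (M^2 - a^2) = 0 :=
        Real.sqrt_eq_zero_of_nonpos (by linarith)
      rw [hs] at hr
      nlinarith [sq_nonneg (r₀ - M)]
  have hpos : 0 < (r₀^2 + a^2)^2 := by positivity
  have := key h
  have hprod : 0 < (Δ r₀/(r₀^2 + a^2)^2) * (Λ - ω^2*(r₀^2 + 2*M*r₀ + a^2)) := by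
    apply mul_pos (div_pos hΔ hpos); linarith
  linarith
end
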